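/- Let G be a finite group with normal subgroup H and let n ≥ 1. Then D(G^n) ≤ D(G^n/H^n) + (1 + |G|·D(G^n/H^n))·D(H^n). -/

import Mathlib

/-- Minimal length of a word in elements of `X` (no inverses) expressing `g`;
`0` if no such word exists (by `sInf` of empty set). -/
noncomputable def wordLen {G : Type*} [Group G] (X : Set G) (g : G) : ℕ :=
  sInf {n | ∃ w : List G, (∀ x ∈ w, x ∈ X) ∧ w.length = n ∧ w.prod = g}

/-- Minimal length of a word in elements of `X ∪ X⁻¹` expressing `g`. -/
noncomputable def symWordLen {G : Type*} [Group G] (X : Set G) (g : G) : ℕ :=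
  wordLen (X ∪ X⁻¹) g

/-- The (non-symmetric) diameter of `G` with respect to `X`. -/
noncomputable def diam (G : Type*) [Group G] (X : Set G) : ℕ :=
  sSup (Set.range (wordLen X))

/-- The symmetric diameter of `G` with respect to `X`. -/
noncomputable def symDiam (G : Type*) [Group G] (X : Set G) : ℕ :=
  sSup (Set.range (symWordLen X))

/-- `D(G)`: maximum of `diam` over all generating sets. -/
noncomputable def maxDiam (G : Type*) [Group G] : ℕ :=
  sSup {d | ∃ X : Set G, Subgroup.closure X = ⊤ ∧ diam G X = d}

/-- `D^s(G)`: maximum of `symDiam` over all generating sets. -/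
noncomputable def maxSymDiam (G : Type*) [Group G] : ℕ :=
  sSup {d | ∃ X : Set G, Subgroup.closure X = ⊤ ∧ symDiam G X = d}

/-- `rank(G)`: minimal cardinality of a generating set. -/
noncomputable def grpRank (G : Type*) [Group G] : ℕ :=
  sInf {n | ∃ S : Finset G, S.card = n ∧ Subgroup.closure (S : Set G) = ⊤}

/-- `T` is a right transversal for `G` mod `H`: it meets every right coset `Hg`
in exactly one element. -/
def IsRightTransversal {G : Type*} [Group G] (H : Subgroup G) (T : Set G) : Prop :=
  ∀ g : G, ∃! t, t ∈ T ∧ g * t⁻¹ ∈ H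

instance piNormal {ι : Type*} {G : Type*} [Group G] (H : Subgroup G) [hH : H.Normal] :
    (Subgroup.pi Set.univ fun _ : ι => H).Normal := by
  constructor
  intro m hm g i hi
  exact hH.conj_mem _ (hm i trivial) (g i)


section Helpers
variable {Γ : Type*} [Group Γ] {X : Set Γ} {g h : Γ}

lemma word_exists [Finite Γ] (hX : Subgroup.closure X = ⊤) (g : Γ) :
    ∃ w : List Γ, (∀ x ∈ w, x ∈ X) ∧ w.prod = g := by
  have hg : g ∈ Subgroup.closure X := hX ▸ Subgroup.mem_top g
  have key : g ∈ Submonoid.closure X := by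
    refine Subgroup.closure_induction (fun x hx => Submonoid.subset_closure hx)
      (Submonoid.one_mem _) (fun x y _ _ hx hy => Submonoid.mul_mem _ hx hy) ?_ hg
    intro x _ hx
    have ho : 0 < orderOf x := orderOf_pos x
    have hpow : x ^ (orderOf x - 1) ∈ Submonoid.closure X := Submonoid.pow_mem _ hx _
    have he : x ^ (orderOf x - 1) = x⁻¹ := by
      have h1 : x * x ^ (orderOf x - 1) = 1 := by
        rw [← pow_succ', Nat.sub_add_cancel ho]
        exact pow_orderOf_eq_one x
      exact (inv_eq_of_mul_eq_one_right h1).symm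
    rwa [he] at hpow
  exact Submonoid.exists_list_of_mem_closure key

lemma wordLen_le {w : List Γ} (hw : ∀ x ∈ w, x ∈ X) (hp : w.prod = g) :
    wordLen X g ≤ w.length := Nat.sInf_le ⟨w, hw, rfl, hp⟩

lemma exists_min_word (h : ∃ w : List Γ, (∀ x ∈ w, x ∈ X) ∧ w.prod = g) :
    ∃ w : List Γ, (∀ x ∈ w, x ∈ X) ∧ w.length = wordLen X g ∧ w.prod = g := by
  have : wordLen X g ∈ {n | ∃ w : List Γ, (∀ x ∈ w, x ∈ X) ∧ w.length = n ∧ w.prod = g} := by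
    apply Nat.sInf_mem
    obtain ⟨w, h1, h2⟩ := h
    exact ⟨w.length, w, h1, rfl, h2⟩
  exact this

lemma wordLen_mul (hg : ∃ w : List Γ, (∀ x ∈ w, x ∈ X) ∧ w.prod = g)
    (hh : ∃ w : List Γ, (∀ x ∈ w, x ∈ X) ∧ w.prod = h) :
    wordLen X (g * h) ≤ wordLen X g + wordLen X h := by
  obtain ⟨wg, hg1, hg2, hg3⟩ := exists_min_word hg
  obtain ⟨wh, hh1, hh2, hh3⟩ := exists_min_word hh
  have := wordLen_le (w := wg ++ wh) (g := g * h)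
    (fun x hx => (List.mem_append.mp hx).elim (hg1 x) (hh1 x))
    (by rw [List.prod_append, hg3, hh3])
  simpa [hg2, hh2] using this

lemma wordLen_inv {e : ℕ} (he : g ^ e = 1) (he1 : 1 ≤ e)
    (h : ∃ w : List Γ, (∀ x ∈ w, x ∈ X) ∧ w.prod = g) :
    wordLen X g⁻¹ ≤ (e - 1) * wordLen X g := by
  obtain ⟨w, hw, hlen, hp⟩ := exists_min_word h
  have hinv : g ^ (e - 1) = g⁻¹ := by
    have h1 : g * g ^ (e - 1) = 1 := by rw [← pow_succ', Nat.sub_add_cancel he1]; exact he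
    exact (inv_eq_of_mul_eq_one_right h1).symm
  have := wordLen_le (w := (List.replicate (e - 1) w).flatten) (g := g⁻¹)
    (fun x hx => by
      obtain ⟨l, hl, hxl⟩ := List.mem_flatten.mp hx
      exact hw x ((List.mem_replicate.mp hl).2 ▸ hxl))
    (by rw [List.prod_flatten, List.map_replicate, List.prod_replicate, hp, hinv])
  calc wordLen X g⁻¹ ≤ (List.replicate (e - 1) w).flatten.length := this
    _ = (e - 1) * wordLen X g := by
        rw [List.length_flatten, List.map_replicate, List.sum_replicate, smul_eq_mul, hlen]

lemma wordLen_le_diam [Finite Γ] (g : Γ) : wordLen X g ≤ diam Γ X :=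
  le_csSup (Set.finite_range _).bddAbove ⟨g, rfl⟩

lemma diam_le_maxDiam [Finite Γ] (hX : Subgroup.closure X = ⊤) : diam Γ X ≤ maxDiam Γ := by
  apply le_csSup
  · exact BddAbove.mono (by rintro d ⟨Y, _, hY⟩; exact ⟨Y, hY⟩) (Set.finite_range (diam Γ)).bddAbove
  · exact ⟨X, hX, rfl⟩

lemma maxDiam_le [Finite Γ] {m : ℕ}
    (h : ∀ Y : Set Γ, Subgroup.closure Y = ⊤ → ∀ g : Γ, wordLen Y g ≤ m) :
    maxDiam Γ ≤ m := by
  refine csSup_le ⟨diam Γ Set.univ, Set.univ, Subgroup.closure_univ, rfl⟩ ?_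
  rintro d ⟨Y, hY, rfl⟩
  exact csSup_le (Set.range_nonempty _) (by rintro m ⟨g, rfl⟩; exact h Y hY g)

lemma closure_preimage_top {K : Subgroup Γ} {B : Set Γ}
    (hB : B ⊆ K) (hKB : ∀ k ∈ K, k ∈ Subgroup.closure B) :
    Subgroup.closure ((Subtype.val ⁻¹' B : Set ↥K)) = ⊤ := by
  have hle : Subgroup.closure B ≤ K := (Subgroup.closure_le K).mpr hB
  rw [Subgroup.eq_top_iff']
  intro k
  have main : ∀ x (hx : x ∈ Subgroup.closure B) (hxK : x ∈ K),
      (⟨x, hxK⟩ : ↥K) ∈ Subgroup.closure (Subtype.val ⁻¹' B : Set ↥K) := by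
    intro x hx
    induction hx using Subgroup.closure_induction with
    | mem x hx => exact fun hxK => Subgroup.subset_closure hx
    | one => exact fun _ => Subgroup.one_mem _
    | mul x y hx hy ihx ihy =>
        intro hxyK
        exact Subgroup.mul_mem _ (ihx (hle hx)) (ihy (hle hy))
    | inv x hx ihx =>
        intro hxK
        exact Subgroup.inv_mem _ (ihx (hle hx))
  have := main k (hKB k k.2) k.2
  simpa using this

end Helpers

theorem stmt10 {G : Type*} [Group G] [Finite G] (H : Subgroup G) [H.Normal] (n : ℕ) (hn : 1 ≤ n) :
    maxDiam (Fin n → G) ≤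
      maxDiam ((Fin n → G) ⧸ Subgroup.pi Set.univ (fun _ => H)) +
        (1 + Nat.card G * maxDiam ((Fin n → G) ⧸ Subgroup.pi Set.univ (fun _ => H))) *
          maxDiam (Subgroup.pi Set.univ (fun _ : Fin n => H)) := by
  classical
  set K : Subgroup (Fin n → G) := Subgroup.pi Set.univ (fun _ => H) with hKdef
  set DQ := maxDiam ((Fin n → G) ⧸ K) with hDQ
  set DK := maxDiam ↥K with hDKdef
  set C := 1 + Nat.card G * DQ with hC
  apply maxDiam_le
  intro A hA g
  set π := QuotientGroup.mk' K with hπ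
  have hπs : Function.Surjective π := QuotientGroup.mk'_surjective K
  have hker : ∀ x : Fin n → G, π x = 1 ↔ x ∈ K := fun x => QuotientGroup.eq_one_iff x
  have hAQ : Subgroup.closure (π '' A) = ⊤ := by
    rw [← MonoidHom.map_closure, hA]
    exact Subgroup.map_top_of_surjective π hπs
  have hexp : ∀ x : Fin n → G, x ^ Nat.card G = 1 := by
    intro x; funext i
    simp only [Pi.pow_apply, Pi.one_apply]
    exact pow_card_eq_one'
  have hcard : 1 ≤ Nat.card G := Nat.card_pos
  have EWA : ∀ x : Fin n → G, ∃ w : List (Fin n → G), (∀ y ∈ w, y ∈ A) ∧ w.prod = x :=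
    word_exists hA
  -- lifting words from the quotient
  have lift : ∀ wq : List ((Fin n → G) ⧸ K), (∀ x ∈ wq, x ∈ π '' A) →
      ∃ w : List (Fin n → G), (∀ x ∈ w, x ∈ A) ∧ w.length = wq.length ∧ π w.prod = wq.prod := by
    intro wq
    induction wq with
    | nil => exact fun _ => ⟨[], by simp, by simp, by simp⟩
    | cons a t ih =>
        intro hmem
        obtain ⟨b, hbA, hba⟩ := hmem a List.mem_cons_self
        obtain ⟨w, h1, h2, h3⟩ := ih (fun x hx => hmem x (List.mem_cons_of_mem a hx))
        refine ⟨b :: w, ?_, by simp [h2], by simp [List.prod_cons, map_mul, h3, hba]⟩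
        intro x hx
        rcases List.mem_cons.mp hx with hx | hx
        · exact hx ▸ hbA
        · exact h1 x hx
  -- coset representatives with short words
  have rep : ∀ q : (Fin n → G) ⧸ K, ∃ w : List (Fin n → G),
      (∀ x ∈ w, x ∈ A) ∧ π w.prod = q ∧ w.length ≤ DQ := by
    intro q
    obtain ⟨wq, h1, h2, h3⟩ := exists_min_word (word_exists hAQ q)
    obtain ⟨w, hw1, hw2, hw3⟩ := lift wq h1
    refine ⟨w, hw1, by rw [hw3, h3], ?_⟩
    rw [hw2, h2]
    exact (wordLen_le_diam q).trans (diam_le_maxDiam hAQ)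
  choose r hr1 hr2 hr3 using rep
  have hrlen : ∀ q, wordLen A (r q).prod ≤ DQ := fun q => (wordLen_le (hr1 q) rfl).trans (hr3 q)
  have hDQC : DQ ≤ C := le_trans (Nat.le_mul_of_pos_left DQ hcard) (Nat.le_add_left _ 1)
  have hrinv : ∀ q, wordLen A ((r q).prod)⁻¹ ≤ (Nat.card G - 1) * DQ := by
    intro q
    calc wordLen A ((r q).prod)⁻¹ ≤ (Nat.card G - 1) * wordLen A (r q).prod :=
          wordLen_inv (hexp _) hcard (EWA _)
      _ ≤ (Nat.card G - 1) * DQ := Nat.mul_le_mul_left _ (hrlen q)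
  -- the generating set B of K
  set B : Set (Fin n → G) := {b | b ∈ K ∧ wordLen A b ≤ C} with hB
  have hBK : B ⊆ ↑K := fun b hb => hb.1
  -- Schreier-type argument
  have schreier : ∀ w : List (Fin n → G), (∀ x ∈ w, x ∈ A) →
      w.prod * ((r (π w.prod)).prod)⁻¹ ∈ Subgroup.closure B := by
    intro w
    induction w using List.reverseRecOn with
    | nil =>
        intro _
        have hx : (r (π (List.prod []))).prod ∈ B := by
          refine ⟨(hker _).mp ?_, (hrlen _).trans hDQC⟩
          rw [hr2]
          simp
        have := Subgroup.inv_mem _ (Subgroup.subset_closure hx)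
        simpa using this
    | append_singleton w a ih =>
        intro hmem
        have hw := ih (fun x hx => hmem x (List.mem_append_left _ hx))
        have key : (w ++ [a]).prod * ((r (π (w ++ [a]).prod)).prod)⁻¹
            = (w.prod * ((r (π w.prod)).prod)⁻¹) *
              ((r (π w.prod)).prod * a * ((r (π (w ++ [a]).prod)).prod)⁻¹) := by
          rw [List.prod_append, List.prod_singleton]
          group
        rw [key]
        refine Subgroup.mul_mem _ hw (Subgroup.subset_closure ?_)
        constructor
        · show _ ∈ K
          rw [← hker]
          simp only [map_mul, map_inv, hr2]
          rw [List.prod_append, List.prod_singleton, map_mul]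
          group
        · show wordLen A _ ≤ C
          have ha1 : wordLen A a ≤ 1 := by
            have := wordLen_le (w := [a]) (g := a)
              (by intro x hx; rw [List.mem_singleton] at hx; exact hx ▸ hmem a (List.mem_append_right _ (List.mem_singleton_self a)))
              (by simp)
            simpa using this
          calc wordLen A ((r (π w.prod)).prod * a * ((r (π (w ++ [a]).prod)).prod)⁻¹)
              ≤ wordLen A ((r (π w.prod)).prod * a) + wordLen A (((r (π (w ++ [a]).prod)).prod)⁻¹) :=
                wordLen_mul (EWA _) (EWA _)
            _ ≤ (wordLen A ((r (π w.prod)).prod) + wordLen A a) + (Nat.card G - 1) * DQ :=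
                add_le_add (wordLen_mul (EWA _) (EWA _)) (hrinv _)
            _ ≤ (DQ + 1) + (Nat.card G - 1) * DQ := add_le_add (add_le_add (hrlen _) ha1) le_rfl
            _ ≤ C := by
                obtain ⟨c, hc⟩ : ∃ c, Nat.card G = c + 1 := ⟨Nat.card G - 1, by omega⟩
                rw [hC, hc]
                have : DQ + 1 + (c + 1 - 1) * DQ = 1 + (c + 1) * DQ := by
                  rw [Nat.add_sub_cancel]; ring
                omega
  -- K is contained in the closure of B
  have hKB : ∀ k ∈ K, k ∈ Subgroup.closure B := by
    intro k hk
    obtain ⟨w, hw, hp⟩ := EWA k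
    have h1 := schreier w hw
    rw [hp, (hker k).mpr hk] at h1
    have hx : (r 1).prod ∈ B := ⟨(hker _).mp (hr2 1), (hrlen _).trans hDQC⟩
    have h2 := Subgroup.mul_mem _ h1 (Subgroup.subset_closure hx)
    simpa [mul_assoc] using h2
  set B' : Set ↥K := Subtype.val ⁻¹' B with hB'
  have hB'top : Subgroup.closure B' = ⊤ := closure_preimage_top hBK hKB
  have EWB : ∀ k : ↥K, ∃ w : List ↥K, (∀ y ∈ w, y ∈ B') ∧ w.prod = k := word_exists hB'top
  have lift_bound : ∀ v : List ↥K, (∀ x ∈ v, x ∈ B') →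
      wordLen A (↑v.prod : Fin n → G) ≤ C * v.length := by
    intro v
    induction v with
    | nil =>
        intro _
        have h0 : wordLen A (1 : Fin n → G) ≤ 0 :=
          wordLen_le (w := []) (by simp) List.prod_nil
        simpa using h0
    | cons b t ih =>
        intro hmem
        have hco : (↑(b :: t).prod : Fin n → G) = ↑b * ↑t.prod := by
          rw [List.prod_cons]; rfl
        rw [hco]
        calc wordLen A ((↑b : Fin n → G) * ↑t.prod)
            ≤ wordLen A ↑b + wordLen A ↑t.prod := wordLen_mul (EWA _) (EWA _)
          _ ≤ C + C * t.length :=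
              add_le_add (hmem b List.mem_cons_self).2
                (ih fun x hx => hmem x (List.mem_cons_of_mem b hx))
          _ = C * (b :: t).length := by rw [List.length_cons]; ring
  -- conclude
  have hk : g * ((r (π g)).prod)⁻¹ ∈ K := by
    rw [← hker]
    simp [map_mul, map_inv, hr2]
  obtain ⟨v, hv1, hv2, hv3⟩ := exists_min_word (EWB ⟨_, hk⟩)
  have hvlen : v.length ≤ DK := by
    rw [hv2]
    exact (wordLen_le_diam _).trans (diam_le_maxDiam hB'top)
  have h1 : wordLen A (g * ((r (π g)).prod)⁻¹) ≤ C * DK := by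
    have := lift_bound v hv1
    rw [hv3] at this
    exact le_trans this (Nat.mul_le_mul_left _ hvlen)
  have h2 : wordLen A g ≤ wordLen A (g * ((r (π g)).prod)⁻¹) + wordLen A ((r (π g)).prod) := by
    have := wordLen_mul (X := A) (EWA (g * ((r (π g)).prod)⁻¹)) (EWA ((r (π g)).prod))
    simpa [inv_mul_cancel_right] using this
  calc wordLen A g ≤ C * DK + DQ := h2.trans (add_le_add h1 (hrlen _))
    _ = DQ + C * DK := by rw [Nat.add_comm]
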